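/- Let s₁,…,s_m be bucket sizes and let L ≥ max_i sᵢ. Run the scanning algorithm with bound L, producing consecutive groups G₁,…,G_t. For each i < t, let z_i be the total size of group G_i plus the size of the first bucket of G_{i+1} (so z_i > L), and let z = min_{i<t} z_i (z = ∞ if t = 1). Then for every bound L' with L ≤ L' < z, the scanning algorithm with bound L' produces exactly the same groups G₁,…,G_t. -/

import Mathlib

/-!
The first group has length `max 1 (greedyLen L s)`, which can only grow when the bound is
raised; but `z₀ > L'` says that the first group together with the next bucket still exceeds
`L'`, so it cannot grow past it. Hence the first group is the same for `L` and `L'`, and the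
claim follows by induction along the scan, the later `zᵢ` being those of the remaining buckets.
-/

/-- The length of the longest prefix of `s` whose sum is at most `L`. -/
def greedyLen (L : ℕ) (s : List ℕ) : ℕ :=
  ((List.range (s.length + 1)).filter (fun j => (s.take j).sum ≤ L)).foldr max 0

/-- The scanning (greedy) algorithm: repeatedly take as the next group the longest
prefix of the remaining buckets whose total size is at most `L`. -/
def scanGroups (L : ℕ) : List ℕ → List (List ℕ)
  | [] => []
  | a :: t =>
      (a :: t).take (max 1 (greedyLen L (a :: t))) ::
        scanGroups L ((a :: t).drop (max 1 (greedyLen L (a :: t))))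
  termination_by s => s.length
  decreasing_by
    simp only [List.length_drop, List.length_cons]
    omega

section

variable {L L' : ℕ} {s : List ℕ}

lemma greedyLen_le_length (L : ℕ) (s : List ℕ) : greedyLen L s ≤ s.length :=
  List.max_le_of_forall_le _ _ fun j hj => by
    simpa [Nat.lt_succ_iff] using (List.mem_filter.1 hj).1

lemma le_greedyLen {j : ℕ} (hj : j ≤ s.length) (h : (s.take j).sum ≤ L) : j ≤ greedyLen L s :=
  List.le_max_of_le' 0 (List.mem_filter.2 ⟨List.mem_range.2 (by omega), by simpa using h⟩) le_rfl

lemma greedyLen_lt {j : ℕ} (h : L < (s.take j).sum) : greedyLen L s < j := by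
  have hj : 0 < j := Nat.pos_of_ne_zero fun h0 => by simp [h0] at h
  suffices greedyLen L s ≤ j - 1 by omega
  refine List.max_le_of_forall_le _ _ fun i hi => ?_
  have hi : (s.take i).sum ≤ L := by simpa using (List.mem_filter.1 hi).2
  have : i < j := not_le.1 fun hji => (List.monotone_sum_take s hji).not_gt (hi.trans_lt h)
  omega

lemma sum_take_greedyLen_le (L : ℕ) (s : List ℕ) : (s.take (greedyLen L s)).sum ≤ L :=
  not_lt.1 fun h => (greedyLen_lt h).false

lemma greedyLen_mono (hL : L ≤ L') (s : List ℕ) : greedyLen L s ≤ greedyLen L' s :=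
  le_greedyLen (greedyLen_le_length L s) ((sum_take_greedyLen_le L s).trans hL)

lemma max_one_greedyLen_eq (hL : L ≤ L')
    (h : s.length ≤ max 1 (greedyLen L s) ∨ L' < (s.take (max 1 (greedyLen L s) + 1)).sum) :
    max 1 (greedyLen L' s) = max 1 (greedyLen L s) := by
  refine le_antisymm (max_le (le_max_left _ _) ?_) (max_le_max le_rfl (greedyLen_mono hL s))
  rcases h with h | h
  · exact (greedyLen_le_length L' s).trans h
  · exact Nat.lt_succ_iff.1 (greedyLen_lt h)

lemma sum_take_add_one (s : List ℕ) (k : ℕ) :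
    (s.take (k + 1)).sum = (s.take k).sum + (s.drop k).headI := by
  rw [List.take_add, List.sum_append]
  cases s.drop k <;> simp

lemma scanGroups_eq_nil_iff : scanGroups L s = [] ↔ s = [] := by
  cases s <;> simp [scanGroups.eq_1, scanGroups.eq_2]

lemma headI_getD_zero_scanGroups (L : ℕ) (s : List ℕ) :
    ((scanGroups L s).getD 0 []).headI = s.headI := by
  cases s with
  | nil => simp [scanGroups.eq_1]
  | cons a t => simp [scanGroups.eq_2, List.take_cons (lt_max_of_lt_left one_pos)]

end

theorem scanning_same_groups_below_z_general
    (s : List ℕ) (L : ℕ)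
    (L' : ℕ) (hLL' : L ≤ L')
    (hz : ∀ i : ℕ, i + 1 < (scanGroups L s).length →
        L' < ((scanGroups L s).getD i []).sum + ((scanGroups L s).getD (i + 1) []).headI) :
    scanGroups L' s = scanGroups L s := by
  induction s using scanGroups.induct L with
  | case1 => rw [scanGroups.eq_1, scanGroups.eq_1]
  | case2 a t ih =>
    set k := max 1 (greedyLen L (a :: t))
    have hsplit : scanGroups L (a :: t) = (a :: t).take k :: scanGroups L ((a :: t).drop k) :=
      scanGroups.eq_2 L a t
    have hk : max 1 (greedyLen L' (a :: t)) = k := by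
      refine max_one_greedyLen_eq hLL' (or_iff_not_imp_left.2 fun hlt => ?_)
      have hrest : scanGroups L ((a :: t).drop k) ≠ [] := by
        rw [Ne, scanGroups_eq_nil_iff, List.drop_eq_nil_iff]; exact hlt
      have := hz 0 (by simpa [hsplit, List.length_pos_iff] using hrest)
      rwa [hsplit, List.getD_cons_zero, List.getD_cons_succ, headI_getD_zero_scanGroups,
        ← sum_take_add_one] at this
    rw [scanGroups.eq_2 L' a t, hk, hsplit]
    congr 1
    exact ih fun i hi => by simpa [hsplit] using hz (i + 1) (by simpa [hsplit] using hi)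

/-- Run the scanning algorithm with bound `L ≥ max_i sᵢ`, producing groups `G₁,…,G_t`.
For each `i < t` let `z_i` be the total size of `G_i` plus the size of the first bucket
of `G_{i+1}`, and let `z = min_{i<t} z_i` (`z = ∞` if `t = 1`).  Then every bound `L'`
with `L ≤ L' < z` (i.e. `L ≤ L'` and `L' < z_i` for all applicable `i`) makes the
scanning algorithm produce exactly the same groups. -/
theorem scanning_same_groups_below_z
    (s : List ℕ) (L : ℕ) (hmax : ∀ x ∈ s, x ≤ L)
    (L' : ℕ) (hLL' : L ≤ L')
    (hz : ∀ i : ℕ, i + 1 < (scanGroups L s).length →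
        L' < ((scanGroups L s).getD i []).sum + ((scanGroups L s).getD (i + 1) []).headI) :
    scanGroups L' s = scanGroups L s :=
  scanning_same_groups_below_z_general s L L' hLL' hz
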